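/- Let A be a type and f₀, …, f_m : ℕ → A be functions with moduli of convergence L₀, …, L_m respectively. Then the left-associated iterated join L₀ ⊔ L₁ ⊔ ⋯ ⊔ L_m is a modulus of convergence simultaneously for every f_i (0 ≤ i ≤ m): for every h ≥ id and every z, each f_i satisfies f_i↓[(L₀⊔⋯⊔L_m) h z, h ((L₀⊔⋯⊔L_m) h z)]. -/

import Mathlib

/-- `f↓[n,m]`: the function `f` is constant on the interval `[n,m]`. -/
def ConvOn {A : Type*} (f : ℕ → A) (n m : ℕ) : Prop :=
  ∀ x, n ≤ x → x ≤ m → f x = f n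

/-- `h ≥ id`. -/
def GeId (h : ℕ → ℕ) : Prop := ∀ x, x ≤ h x

/-- `M` is a modulus of convergence for `f`. -/
def IsModulus {A : Type*} (M : (ℕ → ℕ) → ℕ → ℕ) (f : ℕ → A) : Prop :=
  (∀ h, GeId h → GeId (M h)) ∧
  (∀ h, GeId h → ∀ z, ConvOn f (M h z) (h (M h z)))

/-- The join of two moduli: `(M ⊔ N) h z = N h (M (h ∘ N h) z)`. -/
def joinMod (M N : (ℕ → ℕ) → ℕ → ℕ) : (ℕ → ℕ) → ℕ → ℕ :=
  fun h z => N h (M (h ∘ N h) z)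

/-- The left-associated iterated join `L₀ ⊔ L₁ ⊔ ⋯ ⊔ L_m`. -/
def iterJoin : {m : ℕ} → (Fin (m + 1) → (ℕ → ℕ) → ℕ → ℕ) → (ℕ → ℕ) → ℕ → ℕ
  | 0, L => L 0
  | m + 1, L => joinMod (iterJoin (fun i => L i.castSucc)) (L (Fin.last (m + 1)))

/-! The join's value `N h x`, with `x = M (h ∘ N h) z`, has the form `N h _`, so `N`'s
guarantee applies to it directly; and since `x ≤ N h x` its interval `[N h x, h (N h x)]` lies
inside `[x, h (N h x)]`, the interval on which `M`'s guarantee for `h ∘ N h` holds. Induction on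
the number of moduli then handles the iterated join. -/

lemma ConvOn.of_le_left {A : Type*} {f : ℕ → A} {a b c : ℕ} (h : ConvOn f a c)
    (hab : a ≤ b) (hbc : b ≤ c) : ConvOn f b c := by
  intro x hbx hxc
  rw [h x (hab.trans hbx) hxc, h b hab hbc]

lemma GeId.comp {g h : ℕ → ℕ} (hh : GeId h) (hg : GeId g) : GeId (h ∘ g) :=
  fun x => (hg x).trans (hh _)

def PreservesGeId (M : (ℕ → ℕ) → ℕ → ℕ) : Prop := ∀ h, GeId h → GeId (M h)

lemma PreservesGeId.joinMod {M N : (ℕ → ℕ) → ℕ → ℕ} (hM : PreservesGeId M)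
    (hN : PreservesGeId N) : PreservesGeId (joinMod M N) :=
  fun h hh z => (hM (h ∘ N h) (hh.comp (hN h hh)) z).trans (hN h hh _)

lemma IsModulus.preservesGeId {A : Type*} {M : (ℕ → ℕ) → ℕ → ℕ} {f : ℕ → A}
    (hM : IsModulus M f) : PreservesGeId M :=
  hM.1

lemma IsModulus.joinMod_left {A : Type*} {M N : (ℕ → ℕ) → ℕ → ℕ} {f : ℕ → A}
    (hM : IsModulus M f) (hN : PreservesGeId N) : IsModulus (joinMod M N) f :=
  ⟨hM.preservesGeId.joinMod hN, fun h hh z =>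
    (hM.2 (h ∘ N h) (hh.comp (hN h hh)) z).of_le_left (hN h hh _) (hh _)⟩

lemma IsModulus.joinMod_right {A : Type*} {M N : (ℕ → ℕ) → ℕ → ℕ} {f : ℕ → A}
    (hM : PreservesGeId M) (hN : IsModulus N f) : IsModulus (joinMod M N) f :=
  ⟨hM.joinMod hN.preservesGeId, fun h hh _ => hN.2 h hh _⟩

lemma PreservesGeId.iterJoin {m : ℕ} {L : Fin (m + 1) → (ℕ → ℕ) → ℕ → ℕ}
    (hL : ∀ i, PreservesGeId (L i)) : PreservesGeId (iterJoin L) := by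
  induction m with
  | zero => exact hL 0
  | succ m ih => exact (ih fun i => hL i.castSucc).joinMod (hL (Fin.last _))

/-- If `L i` is a modulus of convergence for `f i` for each `i ≤ m`, then the
left-associated iterated join `L₀ ⊔ ⋯ ⊔ L_m` is a modulus of convergence
simultaneously for every `f i`. -/
theorem iterated_join_simultaneous_modulus {A : Type*} (m : ℕ)
    (f : Fin (m + 1) → ℕ → A) (L : Fin (m + 1) → (ℕ → ℕ) → ℕ → ℕ)
    (hL : ∀ i, IsModulus (L i) (f i)) :
    ∀ i : Fin (m + 1), IsModulus (iterJoin L) (f i) := by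
  induction m with
  | zero =>
    intro i
    rw [Fin.fin_one_eq_zero i]
    exact hL 0
  | succ m ih =>
    have hInit : PreservesGeId (iterJoin fun i : Fin (m + 1) => L i.castSucc) :=
      .iterJoin fun i => (hL i.castSucc).preservesGeId
    refine Fin.lastCases ?_ fun j => ?_
    · exact IsModulus.joinMod_right hInit (hL (Fin.last _))
    · have hj := ih (fun i => f i.castSucc) (fun i => L i.castSucc) (fun i => hL i.castSucc) j
      exact hj.joinMod_left (hL (Fin.last _)).preservesGeId
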